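/- arXiv:2602.01112 — 4 statements merged into one kernel-verified Lean document; each statement's English description precedes it below -/
import Mathlib

section
/- Let γ₁,…,γₙ be positive real numbers. Then the number of lattice points (x₁,…,xₙ) ∈ ℤ₊ⁿ with Σ γᵢxᵢ ≤ x equals xⁿ/(n!·γ₁⋯γₙ) + O(x^{n-1}) as x → ∞. -/
/-!
Peel off the first coordinate: the points with `a₀ = k` are the points of the same problem in one
dimension less at level `x - γ₀ k`, so the count is a sum of `⌊x/γ₀⌋ + 1` lower-dimensional counts.
By induction each of them is `(x - γ₀ k)ⁿ⁻¹ / ((n-1)! γ₁⋯γₙ₋₁)` up to `O(xⁿ⁻²)`, and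
`∑ₖ (x - γ₀ k)ⁿ⁻¹` is a Riemann sum of the monotone function `t ↦ (x - γ₀ t)ⁿ⁻¹`, whose integral
over `[0, x/γ₀]` is `xⁿ / (n γ₀)`; it differs from that integral by at most `xⁿ⁻¹`.
-/

open Finset
open scoped Nat

section PowDiff
variable {R : Type*} [CommRing R] [LinearOrder R] [IsOrderedRing R] {b c : R}

theorem pow_succ_sub_pow_succ_le (hb : 0 ≤ b) (hbc : b ≤ c) (n : ℕ) :
    c ^ (n + 1) - b ^ (n + 1) ≤ (n + 1) * c ^ n * (c - b) := by
  have h := abs_pow_sub_pow_le c b (n + 1)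
  rw [abs_of_nonneg (hb.trans hbc), abs_of_nonneg hb, max_eq_left hbc,
    abs_of_nonneg (sub_nonneg.2 hbc), Nat.add_sub_cancel, Nat.cast_succ] at h
  exact (le_abs_self _).trans (h.trans_eq (by ring))

theorem mul_pow_mul_sub_le_pow_succ_sub_pow_succ (hb : 0 ≤ b) (hbc : b ≤ c) (n : ℕ) :
    (n + 1) * b ^ n * (c - b) ≤ c ^ (n + 1) - b ^ (n + 1) := by
  rw [← geom_sum₂_mul]
  refine mul_le_mul_of_nonneg_right ?_ (sub_nonneg.2 hbc)
  have hterm : ∀ i ∈ range (n + 1), b ^ n ≤ c ^ i * b ^ (n + 1 - 1 - i) := fun i hi => by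
    calc b ^ n = b ^ i * b ^ (n + 1 - 1 - i) := by
          rw [← pow_add]; congr 1; have := mem_range.1 hi; omega
      _ ≤ c ^ i * b ^ (n + 1 - 1 - i) := by gcongr
  simpa using card_nsmul_le_sum _ _ _ hterm

end PowDiff

section RiemannSum
variable {g x : ℝ}

theorem sub_mul_natCast_nonneg_of_le_floor (hg : 0 < g) (hx : 0 ≤ x) {k : ℕ}
    (hk : k ≤ ⌊x / g⌋₊) : 0 ≤ x - g * k := by
  have := (Nat.cast_le.2 hk).trans (Nat.floor_le (div_nonneg hx hg.le))
  rw [le_div_iff₀' hg] at this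
  linarith

theorem pow_succ_div_le_sum_sub_mul_pow (hg : 0 < g) (hx : 0 ≤ x) (n : ℕ) :
    x ^ (n + 1) / ((n + 1) * g) ≤ ∑ k ∈ range (⌊x / g⌋₊ + 1), (x - g * k) ^ n := by
  set K := ⌊x / g⌋₊
  -- clamped at `0` so that the telescoping sum below ends at `v (K + 1) = 0`
  let v : ℕ → ℝ := fun k => max (x - g * k) 0
  have hvK : v (K + 1) = 0 := by
    have := Nat.lt_floor_add_one (x / g)
    rw [div_lt_iff₀' hg] at this
    push_cast [v]
    exact max_eq_right (by linarith)
  have htel : x ^ (n + 1) = ∑ k ∈ range (K + 1), (v k ^ (n + 1) - v (k + 1) ^ (n + 1)) := by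
    rw [sum_range_sub', hvK]
    simp [v, hx]
  rw [div_le_iff₀ (by positivity), htel, sum_mul]
  refine sum_le_sum fun k hk => ?_
  have hvk : v k = x - g * k :=
    max_eq_left (sub_mul_natCast_nonneg_of_le_floor hg hx (mem_range_succ_iff.1 hk))
  have hstep : v k - v (k + 1) ≤ g := by
    have : x - g * (k + 1 : ℕ) ≤ v (k + 1) := le_max_left _ _
    push_cast at this
    linarith
  calc v k ^ (n + 1) - v (k + 1) ^ (n + 1) ≤ (n + 1) * v k ^ n * (v k - v (k + 1)) :=
        pow_succ_sub_pow_succ_le (le_max_right _ _) (max_le_max_right 0 (by push_cast; linarith)) n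
    _ ≤ (n + 1) * v k ^ n * g := by gcongr
    _ = _ := by rw [hvk]; ring

theorem sum_sub_mul_pow_le (hg : 0 < g) (hx : 0 ≤ x) (n : ℕ) :
    ∑ k ∈ range (⌊x / g⌋₊ + 1), (x - g * k) ^ n ≤ x ^ (n + 1) / ((n + 1) * g) + x ^ n := by
  set K := ⌊x / g⌋₊
  have hu : ∀ k ≤ K, 0 ≤ x - g * k := fun k hk => sub_mul_natCast_nonneg_of_le_floor hg hx hk
  have hbound : (n + 1) * g * ∑ k ∈ range K, (x - g * (k + 1 : ℕ)) ^ n ≤ x ^ (n + 1) := by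
    calc (n + 1) * g * ∑ k ∈ range K, (x - g * (k + 1 : ℕ)) ^ n
        ≤ ∑ k ∈ range K, ((x - g * k) ^ (n + 1) - (x - g * (k + 1 : ℕ)) ^ (n + 1)) := by
          rw [mul_sum]
          refine sum_le_sum fun k hk => ?_
          calc (n + 1) * g * (x - g * (k + 1 : ℕ)) ^ n
              = (n + 1) * (x - g * (k + 1 : ℕ)) ^ n * ((x - g * k) - (x - g * (k + 1 : ℕ))) := by
                push_cast; ring
            _ ≤ _ := mul_pow_mul_sub_le_pow_succ_sub_pow_succ (hu (k + 1) (mem_range.1 hk))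
                (by push_cast; linarith) n
      _ = x ^ (n + 1) - (x - g * K) ^ (n + 1) := by rw [sum_range_sub']; simp
      _ ≤ x ^ (n + 1) := sub_le_self _ (pow_nonneg (hu K le_rfl) _)
  rw [sum_range_succ', Nat.cast_zero, mul_zero, sub_zero]
  gcongr
  rwa [le_div_iff₀' (by positivity)]

theorem abs_sum_sub_mul_pow_sub_le (hg : 0 < g) (hx : 0 ≤ x) (n : ℕ) :
    |∑ k ∈ range (⌊x / g⌋₊ + 1), (x - g * k) ^ n - x ^ (n + 1) / ((n + 1) * g)| ≤ x ^ n := by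
  rw [abs_sub_le_iff]
  constructor
  · linarith [sum_sub_mul_pow_le hg hx n]
  · linarith [pow_succ_div_le_sum_sub_mul_pow hg hx n, pow_nonneg hx n]

theorem abs_sum_sub_pow_succ_div_le {f : ℝ → ℝ} {A E : ℝ} (hg : 0 < g) (hx : 0 ≤ x) (hA : 0 < A)
    {n : ℕ} (hf : ∀ t ∈ Set.Icc 0 x, |f t - t ^ n / A| ≤ E) :
    |∑ k ∈ range (⌊x / g⌋₊ + 1), f (x - g * k) - x ^ (n + 1) / ((n + 1) * g * A)|
      ≤ (x / g + 1) * E + x ^ n / A := by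
  set K := ⌊x / g⌋₊
  have hE : 0 ≤ E := (abs_nonneg _).trans (hf 0 ⟨le_rfl, hx⟩)
  have hsplit : ∑ k ∈ range (K + 1), f (x - g * k) - x ^ (n + 1) / ((n + 1) * g * A)
      = ∑ k ∈ range (K + 1), (f (x - g * k) - (x - g * k) ^ n / A)
        + (∑ k ∈ range (K + 1), (x - g * k) ^ n - x ^ (n + 1) / ((n + 1) * g)) / A := by
    rw [sum_sub_distrib, ← sum_div]
    field_simp
    ring
  have hterms : |∑ k ∈ range (K + 1), (f (x - g * k) - (x - g * k) ^ n / A)| ≤ (x / g + 1) * E := by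
    calc _ ≤ ∑ k ∈ range (K + 1), |f (x - g * k) - (x - g * k) ^ n / A| := abs_sum_le_sum_abs _ _
      _ ≤ (K + 1) * E := by
          refine (sum_le_card_nsmul _ _ E fun k hk => hf _ ⟨?_, ?_⟩).trans_eq (by simp)
          · exact sub_mul_natCast_nonneg_of_le_floor hg hx (mem_range_succ_iff.1 hk)
          · have : 0 ≤ g * k := by positivity
            linarith
      _ ≤ (x / g + 1) * E := by gcongr; exact Nat.floor_le (div_nonneg hx hg.le)
  rw [hsplit]
  refine (abs_add_le _ _).trans (add_le_add hterms ?_)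
  rw [abs_div, abs_of_pos hA]
  gcongr
  exact abs_sum_sub_mul_pow_sub_le hg hx n

end RiemannSum

def latticePoints {n : ℕ} (γ : Fin n → ℝ) (x : ℝ) : Set (Fin n → ℕ) :=
  {a | ∑ i, γ i * (a i : ℝ) ≤ x}

section LatticePoints
variable {n : ℕ}

theorem mul_le_of_mem_latticePoints {γ : Fin n → ℝ} (hγ : ∀ i, 0 ≤ γ i) {x : ℝ}
    {a : Fin n → ℕ} (ha : a ∈ latticePoints γ x) (i : Fin n) : γ i * a i ≤ x :=
  (single_le_sum (fun j _ => mul_nonneg (hγ j) (a j).cast_nonneg) (mem_univ i)).trans ha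

theorem le_floor_of_mem_latticePoints {γ : Fin n → ℝ} (hγ : ∀ i, 0 < γ i) {x : ℝ}
    {a : Fin n → ℕ} (ha : a ∈ latticePoints γ x) (i : Fin n) : a i ≤ ⌊x / γ i⌋₊ :=
  Nat.le_floor <| (le_div_iff₀' (hγ i)).2 <| mul_le_of_mem_latticePoints (fun j => (hγ j).le) ha i

theorem finite_latticePoints {γ : Fin n → ℝ} (hγ : ∀ i, 0 < γ i) (x : ℝ) :
    (latticePoints γ x).Finite :=
  (Set.finite_Iic fun i => ⌊x / γ i⌋₊).subset fun _ ha => le_floor_of_mem_latticePoints hγ ha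

theorem ncard_latticePoints_fin_zero (γ : Fin 0 → ℝ) {x : ℝ} (hx : 0 ≤ x) :
    (latticePoints γ x).ncard = 1 := by
  simp [latticePoints, hx]

theorem cons_mem_latticePoints_iff {γ : Fin (n + 1) → ℝ} {x : ℝ} {k : ℕ} {b : Fin n → ℕ} :
    Fin.cons k b ∈ latticePoints γ x ↔ b ∈ latticePoints (Fin.tail γ) (x - γ 0 * k) := by
  simp only [latticePoints, Set.mem_ofPred_eq, Fin.sum_univ_succ, Fin.cons_zero, Fin.cons_succ,
    Fin.tail, le_sub_iff_add_le']

theorem latticePoints_inter_fiber {γ : Fin (n + 1) → ℝ} {x : ℝ} (k : ℕ) :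
    {a ∈ latticePoints γ x | a 0 = k} = Fin.cons k '' latticePoints (Fin.tail γ) (x - γ 0 * k) := by
  ext a
  obtain ⟨j, b, rfl⟩ : ∃ j b, a = Fin.cons j b := ⟨a 0, Fin.tail a, (Fin.cons_self_tail a).symm⟩
  simp only [Set.mem_ofPred_eq, Fin.cons_zero, Set.mem_image, Fin.cons_inj]
  constructor
  · rintro ⟨h, rfl⟩
    exact ⟨b, cons_mem_latticePoints_iff.1 h, rfl, rfl⟩
  · rintro ⟨b, h, rfl, rfl⟩
    exact ⟨cons_mem_latticePoints_iff.2 h, rfl⟩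

theorem ncard_latticePoints_succ {γ : Fin (n + 1) → ℝ} (hγ : ∀ i, 0 < γ i) (x : ℝ) :
    (latticePoints γ x).ncard = ∑ k ∈ range (⌊x / γ 0⌋₊ + 1),
      (latticePoints (Fin.tail γ) (x - γ 0 * k)).ncard := by
  classical
  have hfin := finite_latticePoints hγ x
  have hfirst : ∀ a ∈ hfin.toFinset, a 0 ∈ range (⌊x / γ 0⌋₊ + 1) := fun a ha =>
    mem_range_succ_iff.2 <| le_floor_of_mem_latticePoints hγ (hfin.mem_toFinset.1 ha) 0
  rw [Set.ncard_eq_toFinset_card _ hfin, card_eq_sum_card_fiberwise hfirst]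
  refine sum_congr rfl fun k _ => ?_
  rw [← Set.ncard_coe_finset, coe_filter,
    ← Set.ncard_image_of_injective (latticePoints _ _)
      (Fin.cons_right_injective (α := fun _ => ℕ) k),
    ← latticePoints_inter_fiber]
  simp only [Set.Finite.mem_toFinset]

theorem abs_ncard_latticePoints_succ_sub_le {γ : Fin (n + 1) → ℝ} (hγ : ∀ i, 0 < γ i) {x E : ℝ}
    (hx : 0 ≤ x) (hE : ∀ t ∈ Set.Icc 0 x, |((latticePoints (Fin.tail γ) t).ncard : ℝ)
      - t ^ n / (n ! * ∏ i, Fin.tail γ i)| ≤ E) :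
    |((latticePoints γ x).ncard : ℝ) - x ^ (n + 1) / ((n + 1)! * ∏ i, γ i)|
      ≤ (x / γ 0 + 1) * E + x ^ n / (n ! * ∏ i, Fin.tail γ i) := by
  have hA : 0 < (n ! : ℝ) * ∏ i, Fin.tail γ i :=
    mul_pos (by positivity) (prod_pos fun i _ => hγ i.succ)
  have hfac : ((n + 1)! : ℝ) * ∏ i, γ i = (n + 1) * γ 0 * (n ! * ∏ i, Fin.tail γ i) := by
    rw [Fin.prod_univ_succ, Nat.factorial_succ]; push_cast; simp only [Fin.tail]; ring
  rw [ncard_latticePoints_succ hγ, Nat.cast_sum, hfac]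
  exact abs_sum_sub_pow_succ_div_le (hγ 0) hx hA hE

end LatticePoints

-- Indexed by `n + 1` weights so that the error exponent is `n` rather than a truncated `n - 1`.
theorem exists_abs_ncard_latticePoints_sub_le (n : ℕ) (γ : Fin (n + 1) → ℝ) (hγ : ∀ i, 0 < γ i) :
    ∃ C, 0 ≤ C ∧ ∀ x, 0 ≤ x →
      |((latticePoints γ x).ncard : ℝ) - x ^ (n + 1) / ((n + 1)! * ∏ i, γ i)|
        ≤ C * (x + 1) ^ n := by
  induction n with
  | zero =>
    refine ⟨1, zero_le_one, fun x hx => ?_⟩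
    refine (abs_ncard_latticePoints_succ_sub_le hγ hx (E := 0) fun t ht => ?_).trans_eq ?_
    · simp [ncard_latticePoints_fin_zero _ ht.1]
    · simp
  | succ n ih =>
    obtain ⟨C, hC, hbound⟩ := ih (Fin.tail γ) fun i => hγ i.succ
    have hA : 0 < ((n + 1)! : ℝ) * ∏ i, Fin.tail γ i :=
      mul_pos (by positivity) (prod_pos fun i _ => hγ i.succ)
    have hg := hγ 0
    refine ⟨C * (1 / γ 0 + 1) + 1 / ((n + 1)! * ∏ i, Fin.tail γ i),
      add_nonneg (mul_nonneg hC (by positivity)) (one_div_pos.2 hA).le, fun x hx => ?_⟩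
    refine (abs_ncard_latticePoints_succ_sub_le hγ hx (E := C * (x + 1) ^ n)
      fun t ht => ?_).trans ?_
    · exact (hbound t ht.1).trans <| mul_le_mul_of_nonneg_left
        (pow_le_pow_left₀ (by linarith [ht.1]) (by linarith [ht.2]) n) hC
    · have hcount : x / γ 0 + 1 ≤ (1 / γ 0 + 1) * (x + 1) := by
        rw [div_eq_mul_one_div x]; nlinarith [one_div_pos.2 hg]
      calc (x / γ 0 + 1) * (C * (x + 1) ^ n) + x ^ (n + 1) / ((n + 1)! * ∏ i, Fin.tail γ i)
          ≤ (1 / γ 0 + 1) * (x + 1) * (C * (x + 1) ^ n)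
            + (x + 1) ^ (n + 1) / ((n + 1)! * ∏ i, Fin.tail γ i) := by
            gcongr
            linarith
        _ = _ := by ring

/-- **Weighted lattice point count, leading term.**
For positive real weights `γ₁, …, γₙ`, the number of lattice points
`(a₁, …, aₙ) ∈ ℤ₊ⁿ` with `∑ γᵢ aᵢ ≤ x` equals `xⁿ/(n!·γ₁⋯γₙ) + O(x^{n-1})`. -/
theorem weighted_lattice_count_leading (n : ℕ) (γ : Fin n → ℝ) (hγ : ∀ i, 0 < γ i) :
    ∃ C : ℝ, ∀ x : ℝ, 1 ≤ x →
      |((Set.ncard {a : Fin n → ℕ | (∑ i, γ i * (a i : ℝ)) ≤ x} : ℕ) : ℝ)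
        - x ^ n / ((n.factorial : ℝ) * ∏ i, γ i)| ≤ C * x ^ (n - 1) := by
  rcases n with _ | n
  · refine ⟨0, fun x hx => ?_⟩
    change |((latticePoints γ x).ncard : ℝ) - _| ≤ _
    simp [ncard_latticePoints_fin_zero γ (zero_le_one.trans hx)]
  obtain ⟨C, hC, hbound⟩ := exists_abs_ncard_latticePoints_sub_le n γ hγ
  refine ⟨C * 2 ^ n, fun x hx => (hbound x (by linarith)).trans ?_⟩
  calc C * (x + 1) ^ n ≤ C * (2 * x) ^ n := by gcongr; linarith
    _ = C * 2 ^ n * x ^ (n + 1 - 1) := by rw [mul_pow, Nat.add_sub_cancel]; ring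
end

section
/- Let n ≥ 2, γ > 0, and for x > 0 set F(x) = Σ_{k=0}^{⌊x/γ⌋} (x−γk)^{n-1} − xⁿ/(nγ). Then F(x) = x^{n-1}/2 + r(x) where r(x) = O(x^{n-1}) and lim_{T→∞} (1/Tⁿ)·∫₀ᵀ r(x) dx = 0. -/
/-!
Put `D_m(x) = γ ∑_{0 ≤ k ≤ x/γ} (x - γk)^m - x^{m+1}/(m+1) - γx^m/2`, so that the remainder is
`r = D_{n-1}/γ`. Integrating the sum term by term (each term is `(x - γk)₊^m`) gives
`∫₀ᵀ D_m = D_{m+1}(T)/(m+1)` for `m ≥ 1`. The function `D_1` is the `γ`-periodic antiderivative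
`t(γ - t)/2`, `t = x mod γ`, of the sawtooth `D_0`; it is bounded by `γ²/8`, so integrating
repeatedly gives `|D_m(x)| ≤ mγ²x^{m-1}/8`. Hence `r = O(x^{n-2})` and
`∫₀ᵀ r = D_n(T)/(nγ) = O(T^{n-1}) = o(Tⁿ)`.
-/

open Filter MeasureTheory intervalIntegral Finset Asymptotics

noncomputable def gridSum (γ : ℝ) (m : ℕ) (x : ℝ) : ℝ :=
  ∑ k ∈ range (⌊x / γ⌋₊ + 1), (x - γ * k) ^ m

noncomputable def gridRemainder (γ : ℝ) (m : ℕ) (x : ℝ) : ℝ :=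
  γ * gridSum γ m x - x ^ (m + 1) / (m + 1) - γ * x ^ m / 2

section

variable {γ : ℝ}

lemma le_floor_div_iff_mul_le (hγ : 0 < γ) {x : ℝ} (hx : 0 ≤ x) (k : ℕ) :
    k ≤ ⌊x / γ⌋₊ ↔ γ * k ≤ x := by
  rw [Nat.le_floor_iff (div_nonneg hx hγ.le), le_div_iff₀' hγ]

lemma gridSum_succ_eq_sum_posPart (hγ : 0 < γ) (m : ℕ) {x : ℝ} (hx : 0 ≤ x) {N : ℕ}
    (hN : ⌊x / γ⌋₊ < N) :
    gridSum γ (m + 1) x = ∑ k ∈ range N, max (x - γ * k) 0 ^ (m + 1) := by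
  refine sum_subset_zero_on_sdiff (range_subset_range.2 hN) (fun k hk => ?_) (fun k hk => ?_)
  · have hxk : x < γ * k := by
      simpa [le_floor_div_iff_mul_le hγ hx] using (mem_sdiff.1 hk).2
    rw [max_eq_right (by linarith), zero_pow m.succ_ne_zero]
  · have hxk : γ * k ≤ x := by
      simpa [Nat.lt_succ_iff, le_floor_div_iff_mul_le hγ hx] using hk
    rw [max_eq_left (by linarith)]

lemma eqOn_gridSum_succ (hγ : 0 < γ) (m : ℕ) (T : ℝ) :
    Set.EqOn (gridSum γ (m + 1))
      (fun x => ∑ k ∈ range (⌊T / γ⌋₊ + 1), max (x - γ * k) 0 ^ (m + 1)) (Set.Icc 0 T) :=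
  fun x hx => gridSum_succ_eq_sum_posPart hγ m hx.1 <| Nat.lt_succ_of_le <| by gcongr; exact hx.2

lemma intervalIntegrable_gridSum_succ (hγ : 0 < γ) (m : ℕ) {T : ℝ} (hT : 0 ≤ T) :
    IntervalIntegrable (gridSum γ (m + 1)) volume 0 T :=
  ContinuousOn.intervalIntegrable_of_Icc hT <|
    (by fun_prop : Continuous _).continuousOn.congr (eqOn_gridSum_succ hγ m T)

lemma integral_posPart_sub_pow {a b c : ℝ} (hac : a ≤ c) (hcb : c ≤ b) (m : ℕ) :
    ∫ x in a..b, max (x - c) 0 ^ (m + 1) = (b - c) ^ (m + 2) / (m + 2) := by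
  have hint : ∀ a b, IntervalIntegrable (fun x : ℝ => max (x - c) 0 ^ (m + 1)) volume a b :=
    fun a b => (by fun_prop : Continuous _).intervalIntegrable a b
  have hleft : ∫ x in a..c, max (x - c) 0 ^ (m + 1) = 0 := by
    refine (integral_congr (g := fun _ => 0) fun x hx => ?_).trans integral_zero
    rw [Set.uIcc_of_le hac] at hx
    simp only [max_eq_right (sub_nonpos.2 hx.2), zero_pow m.succ_ne_zero]
  have hright : ∫ x in c..b, max (x - c) 0 ^ (m + 1) = ∫ x in c..b, (x - c) ^ (m + 1) := by
    refine integral_congr fun x hx => ?_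
    rw [Set.uIcc_of_le hcb] at hx
    simp only [max_eq_left (sub_nonneg.2 hx.1)]
  rw [← integral_add_adjacent_intervals (hint a c) (hint c b), hleft, hright, zero_add,
    integral_comp_sub_right (· ^ (m + 1)), integral_pow]
  push_cast
  ring

lemma integral_gridSum_succ (hγ : 0 < γ) (m : ℕ) {T : ℝ} (hT : 0 ≤ T) :
    ∫ x in 0..T, gridSum γ (m + 1) x = gridSum γ (m + 2) T / (m + 2) := by
  rw [integral_congr (by rw [Set.uIcc_of_le hT]; exact eqOn_gridSum_succ hγ m T),
    integral_finsetSum fun k _ => (by fun_prop : Continuous _).intervalIntegrable _ _,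
    gridSum, sum_div]
  refine sum_congr rfl fun k hk => integral_posPart_sub_pow (by positivity) ?_ m
  exact (le_floor_div_iff_mul_le hγ hT k).1 (Nat.lt_succ_iff.1 (mem_range.1 hk))

lemma integral_gridRemainder_succ (hγ : 0 < γ) (m : ℕ) {T : ℝ} (hT : 0 ≤ T) :
    ∫ x in 0..T, gridRemainder γ (m + 1) x = gridRemainder γ (m + 2) T / (m + 2) := by
  have hsum := (intervalIntegrable_gridSum_succ hγ m hT).const_mul γ
  have hpow : ∀ j : ℕ, IntervalIntegrable (fun x : ℝ => x ^ j) volume 0 T :=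
    fun j => (continuous_pow j).intervalIntegrable _ _
  simp only [gridRemainder]
  rw [integral_sub (hsum.sub ((hpow _).div_const _)) ((hpow _).const_mul γ |>.div_const 2),
    integral_sub hsum ((hpow _).div_const _), intervalIntegral.integral_const_mul,
    integral_gridSum_succ hγ m hT, intervalIntegral.integral_div, intervalIntegral.integral_div,
    intervalIntegral.integral_const_mul, integral_pow, integral_pow]
  push_cast
  field_simp
  ring

lemma sum_range_succ_sub_mul (x γ : ℝ) (K : ℕ) :
    ∑ k ∈ range (K + 1), (x - γ * k) = (K + 1) * (x - γ * K / 2) := by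
  induction K with
  | zero => simp
  | succ K ih => rw [sum_range_succ, ih]; push_cast; ring

lemma gridRemainder_one_eq (x : ℝ) :
    gridRemainder γ 1 x = (x - γ * ⌊x / γ⌋₊) * (γ - (x - γ * ⌊x / γ⌋₊)) / 2 := by
  simp only [gridRemainder, gridSum, pow_one, sum_range_succ_sub_mul]
  push_cast
  ring

lemma abs_gridRemainder_one_le (hγ : 0 < γ) {x : ℝ} (hx : 0 ≤ x) :
    |gridRemainder γ 1 x| ≤ γ ^ 2 / 8 := by
  have ht0 : γ * ⌊x / γ⌋₊ ≤ x := (le_floor_div_iff_mul_le hγ hx _).1 le_rfl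
  have htγ : x < γ * (⌊x / γ⌋₊ + 1) := by
    rw [← div_lt_iff₀' hγ]; exact Nat.lt_floor_add_one _
  rw [gridRemainder_one_eq, abs_le]
  constructor <;> nlinarith [sq_nonneg (γ - 2 * (x - γ * ⌊x / γ⌋₊))]

lemma abs_gridRemainder_succ_le (hγ : 0 < γ) (m : ℕ) {x : ℝ} (hx : 0 ≤ x) :
    |gridRemainder γ (m + 1) x| ≤ (m + 1) * γ ^ 2 / 8 * x ^ m := by
  induction m generalizing x with
  | zero => simpa using abs_gridRemainder_one_le hγ hx
  | succ m ih =>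
    have h := norm_integral_le_of_norm_le (f := gridRemainder γ (m + 1)) hx
      (ae_of_all _ fun t ht => ih ht.1.le)
      ((continuous_pow m).intervalIntegrable (μ := volume) 0 x |>.const_mul ((m + 1) * γ ^ 2 / 8))
    rw [integral_gridRemainder_succ hγ m hx, intervalIntegral.integral_const_mul, integral_pow,
      zero_pow m.succ_ne_zero, sub_zero, Real.norm_eq_abs, abs_div,
      abs_of_pos (by positivity : (0 : ℝ) < m + 2), div_le_iff₀ (by positivity)] at h
    calc |gridRemainder γ (m + 2) x|
        ≤ (m + 1) * γ ^ 2 / 8 * (x ^ (m + 1) / (m + 1)) * (m + 2) := h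
      _ = (↑(m + 1) + 1) * γ ^ 2 / 8 * x ^ (m + 1) := by push_cast; field_simp; ring

lemma isBigO_integral_gridRemainder_succ (hγ : 0 < γ) (m : ℕ) :
    (fun T => ∫ x in 0..T, gridRemainder γ (m + 1) x) =O[atTop] fun T => T ^ (m + 1) := by
  refine IsBigO.of_bound (γ ^ 2 / 8) ?_
  filter_upwards [eventually_ge_atTop 0] with T hT
  rw [integral_gridRemainder_succ hγ m hT, Real.norm_eq_abs, Real.norm_eq_abs, abs_div,
    abs_of_pos (by positivity : (0 : ℝ) < m + 2), abs_of_nonneg (pow_nonneg hT _),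
    div_le_iff₀ (by positivity)]
  have h : |gridRemainder γ (m + 2) T| ≤ (m + 2) * γ ^ 2 / 8 * T ^ (m + 1) := by
    simpa [add_assoc, one_add_one_eq_two] using abs_gridRemainder_succ_le hγ (m + 1) hT
  linarith

end

/-- **Euler–Maclaurin-type averaged estimate.**
Let `n ≥ 2`, `γ > 0`, and for `x > 0` set
`F(x) = ∑_{k=0}^{⌊x/γ⌋} (x−γk)^{n-1} − xⁿ/(nγ)`.
Then `F(x) = x^{n-1}/2 + r(x)` with `r(x) = O(x^{n-1})` and
`(1/Tⁿ)·∫₀ᵀ r(x) dx → 0` as `T → ∞`. -/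
theorem euler_maclaurin_averaged_remainder (n : ℕ) (hn : 2 ≤ n) (γ : ℝ) (hγ : 0 < γ) :
    ∃ r : ℝ → ℝ,
      (∀ x : ℝ, 0 < x →
        (∑ k ∈ Finset.range ((⌊x / γ⌋).toNat + 1), (x - γ * (k : ℝ)) ^ (n - 1))
          - x ^ n / (n * γ) = x ^ (n - 1) / 2 + r x) ∧
      (∃ C : ℝ, ∀ x : ℝ, 1 ≤ x → |r x| ≤ C * x ^ (n - 1)) ∧
      Tendsto (fun T : ℝ => (1 / T ^ n) * ∫ x in (0:ℝ)..T, r x) atTop (nhds 0) := by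
  obtain ⟨m, rfl⟩ : ∃ m, n = m + 2 := ⟨n - 2, by omega⟩
  rw [show m + 2 - 1 = m + 1 by omega]
  refine ⟨fun x => gridRemainder γ (m + 1) x / γ, fun x _ => ?_,
    ⟨(m + 1) * γ / 8, fun x hx => ?_⟩, ?_⟩
  · simp only [gridRemainder, gridSum, Int.floor_toNat]
    push_cast
    field_simp
    ring
  · have hx0 : (0 : ℝ) ≤ x := zero_le_one.trans hx
    calc |gridRemainder γ (m + 1) x / γ|
        ≤ (m + 1) * γ ^ 2 / 8 * x ^ m / γ := by
          rw [abs_div, abs_of_pos hγ]; gcongr; exact abs_gridRemainder_succ_le hγ m hx0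
      _ = (m + 1) * γ / 8 * x ^ m := by field_simp
      _ ≤ (m + 1) * γ / 8 * x ^ (m + 1) := by gcongr; exact m.le_succ
  · have h := ((isBigO_integral_gridRemainder_succ hγ m).trans_isLittleO
      (isLittleO_pow_pow_atTop_of_lt (by omega : m + 1 < m + 2))).tendsto_div_nhds_zero.div_const γ
    rw [zero_div] at h
    refine h.congr fun T => ?_
    rw [intervalIntegral.integral_div]
    ring
end

section
/- Let n ≥ 1 and γ > 0. Then for each fixed x, the integral ∫₀¹ (xu/γ − ⌊xu/γ⌋ − 1/2)·u^{n-2} du tends to 0 as x → ∞. -/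
open Filter MeasureTheory intervalIntegral Set

/-! The sawtooth `s(t) = {t} - 1/2` has the bounded periodic primitive `P(t) = {t}({t} - 1)/2`,
`|P| ≤ 1/8`. Since `u ↦ P(cu)/c` is a primitive of `u ↦ s(cu)`, integrating by parts against a
weight `g` moves the oscillation onto `P` and gains a factor `1/c`:
`|∫ₐᵇ s(cu) g(u) du| ≤ (|g a| + |g b| + ∫ₐᵇ |g'|) / (8c)`. -/

noncomputable def sawtooth (t : ℝ) : ℝ := Int.fract t - 1 / 2

noncomputable def sawtoothPrimitive (t : ℝ) : ℝ := Int.fract t * (Int.fract t - 1) / 2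

@[fun_prop]
theorem continuous_sawtoothPrimitive : Continuous sawtoothPrimitive :=
  ContinuousOn.comp_fract'' (f := fun s : ℝ => s * (s - 1) / 2) (by fun_prop) (by norm_num)

theorem abs_sawtoothPrimitive_le (t : ℝ) : |sawtoothPrimitive t| ≤ 1 / 8 := by
  have h0 := Int.fract_nonneg t
  have h1 := Int.fract_lt_one t
  rw [abs_le, sawtoothPrimitive]
  constructor <;> nlinarith [sq_nonneg (Int.fract t - 1 / 2)]

theorem hasDerivWithinAt_sawtoothPrimitive (t : ℝ) :
    HasDerivWithinAt sawtoothPrimitive (sawtooth t) (Ici t) t := by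
  have hpoly : HasDerivAt (fun s : ℝ => (s - ⌊t⌋) * (s - ⌊t⌋ - 1) / 2) (sawtooth t) t := by
    refine ((((hasDerivAt_id t).sub_const (⌊t⌋ : ℝ)).mul
      (((hasDerivAt_id t).sub_const (⌊t⌋ : ℝ)).sub_const 1)).div_const 2).congr_deriv ?_
    rw [sawtooth, id, ← Int.self_sub_floor]
    ring
  refine hpoly.hasDerivWithinAt.congr_of_eventuallyEq ?_ (by rw [sawtoothPrimitive, Int.fract])
  filter_upwards [Ico_mem_nhdsGE (Int.lt_floor_add_one t)] with s hs
  have hfloor : ⌊s⌋ = ⌊t⌋ := Int.floor_eq_iff.2 ⟨(Int.floor_le t).trans hs.1, hs.2⟩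
  rw [sawtoothPrimitive, Int.fract, hfloor]

theorem intervalIntegrable_sawtooth_comp_mul_left (c a b : ℝ) :
    IntervalIntegrable (fun u => sawtooth (c * u)) volume a b := by
  refine (intervalIntegrable_const (c := (1 : ℝ))).mono_fun
    ((measurable_fract.comp (measurable_const_mul c)).sub_const _).aestronglyMeasurable
    (ae_of_all _ fun u => ?_)
  have h0 := Int.fract_nonneg (c * u)
  have h1 := Int.fract_lt_one (c * u)
  dsimp only
  rw [norm_one, Real.norm_eq_abs, sawtooth, abs_le]
  constructor <;> linarith

section

variable {g g' : ℝ → ℝ} {a b c : ℝ}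

theorem mul_integral_sawtooth_comp_mul_left_mul (hab : a ≤ b) (hc : 0 < c)
    (hg : ContinuousOn g (Icc a b)) (hgg' : ∀ u ∈ Ioo a b, HasDerivAt g (g' u) u)
    (hg' : IntervalIntegrable g' volume a b) :
    c * ∫ u in a..b, sawtooth (c * u) * g u =
      sawtoothPrimitive (c * b) * g b - sawtoothPrimitive (c * a) * g a -
        ∫ u in a..b, sawtoothPrimitive (c * u) * g' u := by
  set F : ℝ → ℝ := fun u => c⁻¹ * sawtoothPrimitive (c * u)
  have hF : ∀ u, HasDerivWithinAt F (sawtooth (c * u)) (Ioi u) u := by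
    intro u
    have hmaps : MapsTo (c * ·) (Ioi u) (Ici (c * u)) := fun v hv =>
      mul_le_mul_of_nonneg_left (le_of_lt hv) hc.le
    exact (((hasDerivWithinAt_sawtoothPrimitive (c * u)).comp u
      ((hasDerivAt_id u).const_mul c).hasDerivWithinAt hmaps).const_mul c⁻¹).congr_deriv
      (by field_simp)
  have hg_cont : ContinuousOn g (uIcc a b) := by rwa [uIcc_of_le hab]
  have hibp := integral_deriv_mul_eq_sub_of_hasDeriv_right (u := F) (v := g)
    (by fun_prop) hg_cont (fun u _ => hF u)
    (fun u hu => (hgg' u (by simpa [hab] using hu)).hasDerivWithinAt)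
    (intervalIntegrable_sawtooth_comp_mul_left c a b) hg'
  rw [intervalIntegral.integral_add
    ((intervalIntegrable_sawtooth_comp_mul_left c a b).mul_continuousOn hg_cont)
    (hg'.continuousOn_mul (by fun_prop))] at hibp
  simp only [F, mul_assoc, intervalIntegral.integral_const_mul] at hibp
  generalize ∫ u in a..b, sawtooth (c * u) * g u = I at hibp ⊢
  generalize ∫ u in a..b, sawtoothPrimitive (c * u) * g' u = J at hibp ⊢
  field_simp at hibp
  linear_combination hibp

theorem mul_abs_integral_sawtooth_comp_mul_left_mul_le (hab : a ≤ b) (hc : 0 < c)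
    (hg : ContinuousOn g (Icc a b)) (hgg' : ∀ u ∈ Ioo a b, HasDerivAt g (g' u) u)
    (hg' : IntervalIntegrable g' volume a b) :
    c * |∫ u in a..b, sawtooth (c * u) * g u| ≤
      (|g a| + |g b| + ∫ u in a..b, |g' u|) / 8 := by
  have hP : ∀ t x, |sawtoothPrimitive t * x| ≤ |x| / 8 := fun t x => by
    rw [abs_mul]
    nlinarith [abs_sawtoothPrimitive_le t, abs_nonneg x]
  have hJ : |∫ u in a..b, sawtoothPrimitive (c * u) * g' u| ≤ (∫ u in a..b, |g' u|) / 8 := by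
    rw [← intervalIntegral.integral_div]
    exact norm_integral_le_of_norm_le (f := fun u => sawtoothPrimitive (c * u) * g' u) hab
      (ae_of_all _ fun u _ => hP _ _) (hg'.abs.div_const 8)
  calc c * |∫ u in a..b, sawtooth (c * u) * g u|
      = |c * ∫ u in a..b, sawtooth (c * u) * g u| := by rw [abs_mul, abs_of_pos hc]
    _ ≤ |sawtoothPrimitive (c * b) * g b| + |sawtoothPrimitive (c * a) * g a| +
          |∫ u in a..b, sawtoothPrimitive (c * u) * g' u| := by
        rw [mul_integral_sawtooth_comp_mul_left_mul hab hc hg hgg' hg']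
        exact (abs_sub _ _).trans (by gcongr; exact abs_sub _ _)
    _ ≤ |g b| / 8 + |g a| / 8 + (∫ u in a..b, |g' u|) / 8 := by
        gcongr <;> apply hP
    _ = (|g a| + |g b| + ∫ u in a..b, |g' u|) / 8 := by ring

theorem tendsto_integral_sawtooth_comp_mul_left_mul_atTop (hab : a ≤ b)
    (hg : ContinuousOn g (Icc a b)) (hgg' : ∀ u ∈ Ioo a b, HasDerivAt g (g' u) u)
    (hg' : IntervalIntegrable g' volume a b) :
    Tendsto (fun c => ∫ u in a..b, sawtooth (c * u) * g u) atTop (nhds 0) := by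
  set C := (|g a| + |g b| + ∫ u in a..b, |g' u|) / 8
  refine squeeze_zero_norm' ?_ (tendsto_const_nhds (x := C) |>.div_atTop tendsto_id)
  filter_upwards [eventually_gt_atTop 0] with c hc
  rw [Real.norm_eq_abs, id, le_div_iff₀ hc, mul_comm]
  exact mul_abs_integral_sawtooth_comp_mul_left_mul_le hab hc hg hgg' hg'

end

theorem sawtooth_riemann_lebesgue_general (n : ℕ) (γ : ℝ) (hγ : 0 < γ) :
    Tendsto (fun x : ℝ =>
        ∫ u in (0:ℝ)..1, (x * u / γ - (⌊x * u / γ⌋ : ℝ) - 1 / 2) * u ^ (n - 2))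
      atTop (nhds 0) := by
  have hintegrand : ∀ x u : ℝ, x * u / γ - (⌊x * u / γ⌋ : ℝ) - 1 / 2 = sawtooth (x / γ * u) :=
    fun x u => by rw [sawtooth, ← Int.self_sub_floor, div_mul_eq_mul_div]
  have hweight := tendsto_integral_sawtooth_comp_mul_left_mul_atTop zero_le_one
    (g := fun u : ℝ => u ^ (n - 2)) (by fun_prop) (fun u _ => hasDerivAt_pow _ u)
    (Continuous.intervalIntegrable (by fun_prop) _ _)
  simp only [hintegrand]
  exact hweight.comp (tendsto_id.atTop_div_const hγ)

/-- **Riemann–Lebesgue-type lemma for the sawtooth function.**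
For `n ≥ 1` and `γ > 0`, the integral
`∫₀¹ (xu/γ − ⌊xu/γ⌋ − 1/2)·u^{n-2} du` tends to `0` as `x → ∞`. -/
theorem sawtooth_riemann_lebesgue (n : ℕ) (hn : 1 ≤ n) (γ : ℝ) (hγ : 0 < γ) :
    Tendsto (fun x : ℝ =>
        ∫ u in (0:ℝ)..1, (x * u / γ - (⌊x * u / γ⌋ : ℝ) - 1 / 2) * u ^ (n - 2))
      atTop (nhds 0) :=
  sawtooth_riemann_lebesgue_general n γ hγ
end

section
/- Hecke transform exact sequence: let M be a ℤ-graded module with a decreasing filtration M_{≥k} coming from a valuative function v_M with values in δ·ℤ, let N̲ ⊆ gr(M) = ⊕_k M_{≥kδ}/M_{≥(k+1)δ} be a graded submodule, and let v'_M be the Hecke transform of v_M along N̲, with filtration M'_{≥nδ} = p_{nδ}^{-1}(N̲_{nδ}) + M_{≥(n+1)δ}. Then there is a natural short exact sequence of graded modules 0 → (gr(M)/N̲)(δ) → gr'(M) → N̲ → 0, where gr'(M) is the associated graded of v'_M. -/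
universe u

variable {R : Type u} [CommRing R] {M : Type u} [AddCommGroup M] [Module R M]

/-- The `k`-th graded piece `F k / F (k+1)` of the associated graded module of a
decreasing `ℤ`-indexed filtration `F` on `M`. -/
def GrPiece (F : ℤ → Submodule R M) (k : ℤ) : Type u :=
  ↥(F k) ⧸ (F (k + 1)).comap (F k).subtype

noncomputable instance (F : ℤ → Submodule R M) (k : ℤ) : AddCommGroup (GrPiece F k) :=
  inferInstanceAs (AddCommGroup (↥(F k) ⧸ (F (k + 1)).comap (F k).subtype))

noncomputable instance (F : ℤ → Submodule R M) (k : ℤ) : Module R (GrPiece F k) :=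
  inferInstanceAs (Module R (↥(F k) ⧸ (F (k + 1)).comap (F k).subtype))

/-- The quotient map `p_k : F k → F k / F (k+1)`. -/
noncomputable def grProj (F : ℤ → Submodule R M) (k : ℤ) :
    ↥(F k) →ₗ[R] GrPiece F k :=
  ((F (k + 1)).comap (F k).subtype).mkQ

/-- The Hecke transform filtration `F' k = p_k⁻¹(N k) + F (k+1)` of a filtration `F`
along a graded submodule `N` of the associated graded module. -/
noncomputable def heckeFil (F : ℤ → Submodule R M)
    (N : ∀ k : ℤ, Submodule R (GrPiece F k)) (k : ℤ) : Submodule R M :=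
  Submodule.map (F k).subtype (Submodule.comap (grProj F k) (N k)) ⊔ F (k + 1)

/-!
Write `F'` for the Hecke transform. Since `F' (k+1) ≤ F (k+1) ≤ F' k`, the third isomorphism
theorem gives the exact sequence `0 → F (k+1) / F' (k+1) → F' k / F' (k+1) → F' k / F (k+1) → 0`.
An element `x ∈ F k` lies in `F' k` exactly when `p_k x ∈ N k`, so `p_{k+1}` identifies the first
term with `(F (k+1) / F (k+2)) / N (k+1)` and `p_k` identifies the last one with `N k`.
-/

namespace Submodule

variable {S P : Type*} [Ring S] [AddCommGroup P] [Module S P] {A B C : Submodule S P}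

noncomputable def subquotientInclusion (hBA : B ≤ A) :
    ↥B ⧸ C.comap B.subtype →ₗ[S] ↥A ⧸ C.comap A.subtype :=
  mapQ _ _ (inclusion hBA) fun _ hx => hx

@[simp]
theorem subquotientInclusion_mk (hBA : B ≤ A) (x : B) :
    subquotientInclusion (C := C) hBA (Quotient.mk x) = Quotient.mk (inclusion hBA x) :=
  rfl

theorem subquotientInclusion_injective (hBA : B ≤ A) :
    Function.Injective (subquotientInclusion (C := C) hBA) := by
  rw [← LinearMap.ker_eq_bot, LinearMap.ker_eq_bot']
  intro y hy
  obtain ⟨x, rfl⟩ := Quotient.mk_surjective _ y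
  rw [subquotientInclusion_mk, Quotient.mk_eq_zero] at hy
  exact (Quotient.mk_eq_zero _).2 hy

theorem exact_subquotientInclusion_factor (hCB : C ≤ B) (hBA : B ≤ A) :
    Function.Exact (subquotientInclusion (C := C) hBA) (factor (comap_mono hCB)) := by
  intro y
  obtain ⟨a, rfl⟩ := Quotient.mk_surjective _ y
  rw [← mkQ_apply, factor_mk, mkQ_apply, Quotient.mk_eq_zero]
  constructor
  · intro ha
    exact ⟨Quotient.mk ⟨a, ha⟩, rfl⟩
  · rintro ⟨z, hz⟩
    obtain ⟨b, rfl⟩ := Quotient.mk_surjective _ z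
    have hba : (b - a : P) ∈ C := (Quotient.eq (C.comap A.subtype)).1 hz
    simpa using B.sub_mem b.2 (hCB hba)

end Submodule

section Hecke

variable {F : ℤ → Submodule R M} {N : ∀ k : ℤ, Submodule R (GrPiece F k)} {k : ℤ}

theorem grProj_surjective : Function.Surjective (grProj F k) :=
  Submodule.mkQ_surjective _

theorem grProj_eq_zero_iff (x : F k) : grProj F k x = 0 ↔ (x : M) ∈ F (k + 1) :=
  Submodule.Quotient.mk_eq_zero _

theorem le_heckeFil : F (k + 1) ≤ heckeFil F N k :=
  le_sup_right

theorem heckeFil_le (hF : F (k + 1) ≤ F k) : heckeFil F N k ≤ F k :=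
  sup_le (Submodule.map_subtype_le _ _) hF

theorem mem_heckeFil_iff (x : F k) : (x : M) ∈ heckeFil F N k ↔ grProj F k x ∈ N k := by
  refine ⟨fun hx => ?_, fun hx => Submodule.mem_sup_left ⟨x, hx, rfl⟩⟩
  obtain ⟨_, ⟨a, ha, rfl⟩, b, hb, hab⟩ := Submodule.mem_sup.1 hx
  have hxa : grProj F k (x - a) = 0 := (grProj_eq_zero_iff _).2 (by simpa [← hab] using hb)
  rw [map_sub, sub_eq_zero] at hxa
  rw [hxa]
  exact ha

variable (F N k)

noncomputable def quotHeckeFilEquiv :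
    (↥(F k) ⧸ (heckeFil F N k).comap (F k).subtype) ≃ₗ[R] GrPiece F k ⧸ N k :=
  (Submodule.quotEquivOfEq _ _ (by ext x; simp [mem_heckeFil_iff])).trans
    (((N k).mkQ ∘ₗ grProj F k).quotKerEquivOfSurjective
      ((N k).mkQ_surjective.comp grProj_surjective))

noncomputable def heckeFilQuotEquiv (hF : F (k + 1) ≤ F k) :
    (↥(heckeFil F N k) ⧸ (F (k + 1)).comap (heckeFil F N k).subtype) ≃ₗ[R] N k :=
  let φ : heckeFil F N k →ₗ[R] N k :=
    (grProj F k ∘ₗ Submodule.inclusion (heckeFil_le hF)).codRestrict (N k)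
      fun x => (mem_heckeFil_iff _).1 x.2
  have hφ : Function.Surjective φ := by
    intro n
    obtain ⟨x, hx⟩ := grProj_surjective (n : GrPiece F k)
    exact ⟨⟨x, (mem_heckeFil_iff x).2 (hx ▸ n.2)⟩, Subtype.ext hx⟩
  (Submodule.quotEquivOfEq _ _ (by ext x; simp [φ, grProj_eq_zero_iff])).trans
    (φ.quotKerEquivOfSurjective hφ)

end Hecke

/-- **Hecke transform exact sequence.**
Let `F` be a decreasing `ℤ`-indexed filtration on a module `M` (the filtration
`M_{≥kδ}` of a valuative function with values in `δ·ℤ`), let `N` be a graded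
submodule of the associated graded `gr(M) = ⊕_k F k / F (k+1)`, and let `F'` be
the Hecke transform filtration `F' k = p_k⁻¹(N k) + F (k+1)`.  Then for every `k`
there is a natural short exact sequence
`0 → (gr(M)/N)(δ)ₖ = (F (k+1)/F (k+2))/N (k+1) → gr'(M)ₖ → N k → 0`. -/
theorem hecke_transform_exact_sequence
    (F : ℤ → Submodule R M) (hF : ∀ k : ℤ, F (k + 1) ≤ F k)
    (N : ∀ k : ℤ, Submodule R (GrPiece F k)) (k : ℤ) :
    ∃ (f : (GrPiece F (k + 1) ⧸ N (k + 1)) →ₗ[R] GrPiece (heckeFil F N) k)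
      (g : GrPiece (heckeFil F N) k →ₗ[R] ↥(N k)),
      Function.Injective f ∧ Function.Surjective g ∧
      LinearMap.range f = LinearMap.ker g := by
  have hCB : heckeFil F N (k + 1) ≤ F (k + 1) := heckeFil_le (hF (k + 1))
  have hBA : F (k + 1) ≤ heckeFil F N k := le_heckeFil
  let e₁ := (quotHeckeFilEquiv F N (k + 1)).symm
  let e₂ := heckeFilQuotEquiv F N k (hF k)
  let ι := Submodule.subquotientInclusion (C := heckeFil F N (k + 1)) hBA
  let π := Submodule.factor (Submodule.comap_mono (f := (heckeFil F N k).subtype) hCB)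
  have hexact : Function.Exact (ι ∘ₗ e₁.toLinearMap) (e₂.toLinearMap ∘ₗ π) :=
    e₂.postcomp_exact_iff_exact.2 <| e₁.precomp_exact_iff_exact.2 <|
      Submodule.exact_subquotientInclusion_factor hCB hBA
  exact ⟨ι ∘ₗ e₁.toLinearMap, e₂.toLinearMap ∘ₗ π,
    (Submodule.subquotientInclusion_injective hBA).comp e₁.injective,
    e₂.surjective.comp (Submodule.factor_surjective _),
    (LinearMap.exact_iff.1 hexact).symm⟩
end
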